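/- Let x̃^n be a sample from the boosted distribution: the law of x^{n,⋆} (the minimizer of Z over M i.i.d. samples from ρ^⊗n, with P(Z_{x^n} > δ) ≤ η for a single sample) conditioned on the event {Z_{x^{n,⋆}} ≤ δ}, for δ ∈ (0,1), η ∈ (0,1). Then for any v ∈ L²_μ(X), the weighted least-squares projection satisfies E(‖Q^{x̃^n}_{V_m} v‖²) ≤ (1−δ)^{-1} M (1 − η^M)^{-1} ‖v‖². -/

import Mathlib

/-!
When `Z_{x^n} ≤ δ` the empirical Gram matrix is `δ`-close to the identity, so
`‖q‖² ≤ (1 - δ)⁻¹ ‖q‖²_{x^n}` for `q ∈ V_m`; the least-squares projection contracts `‖·‖_{x^n}`, hence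
`‖Q v‖² ≤ (1 - δ)⁻¹ ‖v‖²_{x^{n,⋆}} ≤ (1 - δ)⁻¹ ∑ₖ ‖v‖²_{x^n_k}`, and each of the `M` terms has
expectation `‖v‖²` because `ρ = w⁻¹ μ`. The best of `M` draws is bad only if all of them are, so the
conditioning event has probability at least `1 - η ^ M`, which costs the factor `(1 - η ^ M)⁻¹`.
-/

open MeasureTheory ProbabilityTheory

noncomputable section

/-- Spectral norm (matrix operator norm w.r.t. the Euclidean norm) of a real square matrix. -/
def specNorm {m : ℕ} (A : Matrix (Fin m) (Fin m) ℝ) : ℝ :=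
  ‖Matrix.toEuclideanCLM (𝕜 := ℝ) A‖

variable {d : ℕ}

/-- Squared `L²_μ` norm: `‖v‖² = ∫ v² dμ`. -/
def l2normSq {X : Set (Fin d → ℝ)} (μ : Measure X) (v : X → ℝ) : ℝ :=
  ∫ t, v t ^ 2 ∂μ

/-- Squared discrete semi-norm `‖v‖²_{x^n} = (1/n) ∑ᵢ w(xⁱ) v(xⁱ)²`. -/
def discNormSq {X : Set (Fin d → ℝ)} (w : X → ℝ) {n : ℕ} (x : Fin n → X) (v : X → ℝ) : ℝ :=
  (1 / (n : ℝ)) * ∑ i, w (x i) * v (x i) ^ 2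

/-- Empirical Gram matrix `G_{x^n} = (1/n) ∑ᵢ w(xⁱ) φ(xⁱ) ⊗ φ(xⁱ)`. -/
def gram {X : Set (Fin d → ℝ)} {m : ℕ} (w : X → ℝ) (φ : Fin m → X → ℝ) {n : ℕ}
    (x : Fin n → X) : Matrix (Fin m) (Fin m) ℝ :=
  Matrix.of fun j k => (1 / (n : ℝ)) * ∑ i, w (x i) * (φ j (x i) * φ k (x i))

/-- Stability statistic `Z_{x^n} = ‖G_{x^n} − I‖₂`. -/
def Zstat {X : Set (Fin d → ℝ)} {m : ℕ} (w : X → ℝ) (φ : Fin m → X → ℝ) {n : ℕ}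
    (x : Fin n → X) : ℝ :=
  specNorm (gram w φ x - 1)

/-- Orthogonal projection onto `V_m`: `P_{V_m} u = ∑ⱼ (∫ u φⱼ dμ) φⱼ`. -/
def proj {X : Set (Fin d → ℝ)} (μ : Measure X) {m : ℕ} (φ : Fin m → X → ℝ) (u : X → ℝ) :
    X → ℝ :=
  fun t => ∑ j, (∫ s, u s * φ j s ∂μ) * φ j t

/-- Weighted supremum norm `‖v‖_{∞,w} = sup_x w(x)^{1/2} |v(x)|`. -/
def wSupNorm {X : Set (Fin d → ℝ)} (w : X → ℝ) (v : X → ℝ) : ℝ :=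
  ⨆ t : X, Real.sqrt (w t) * |v t|

/-- The approximation space `V_m`, the span of `φ_1, …, φ_m`. -/
def Vspan {X : Set (Fin d → ℝ)} {m : ℕ} (φ : Fin m → X → ℝ) : Submodule ℝ (X → ℝ) :=
  Submodule.span ℝ (Set.range φ)

/-- Law of `M` i.i.d. samples, each an `n`-tuple of i.i.d. points with distribution `ρ`. -/
def bigP {X : Set (Fin d → ℝ)} (ρ : Measure X) (M n : ℕ) : Measure (Fin M → Fin n → X) :=
  Measure.pi fun _ => Measure.pi fun _ => ρ

/-- The constant `C(ε,M) = M (1−ε)^{1−ε}/(M−ε)^{1−ε}` (with `0⁰ = 1`). -/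
def Cconst (M : ℕ) (ε : ℝ) : ℝ :=
  (M : ℝ) * (1 - ε) ^ (1 - ε) / ((M : ℝ) - ε) ^ (1 - ε)

open scoped ENNReal RealInnerProductSpace Matrix

-- No measurability of `f` is assumed: the selection `Q` of least-squares minimizers need not be
-- measurable, and then the Bochner integral is the junk value `0`.
lemma integral_le_of_lintegral_ofReal_le {α : Type*} [MeasurableSpace α] {ν : Measure α}
    {f : α → ℝ} (hf : 0 ≤ f) {c : ℝ} (hc : 0 ≤ c)
    (h : ∫⁻ a, ENNReal.ofReal (f a) ∂ν ≤ ENNReal.ofReal c) : ∫ a, f a ∂ν ≤ c :=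
  calc ∫ a, f a ∂ν ≤ ‖∫ a, f a ∂ν‖ := Real.le_norm_self _
    _ ≤ (∫⁻ a, ENNReal.ofReal ‖f a‖ ∂ν).toReal := norm_integral_le_lintegral_norm f
    _ = (∫⁻ a, ENNReal.ofReal (f a) ∂ν).toReal := by simp_rw [Real.norm_of_nonneg (hf _)]
    _ ≤ c := ENNReal.toReal_le_of_le_ofReal hc h

lemma lintegral_cond_le {α : Type*} [MeasurableSpace α] (ν : Measure α) {s : Set α}
    {f g : α → ℝ≥0∞} (hg : Measurable g) (hfg : ∀ x ∈ s, f x ≤ g x) :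
    ∫⁻ x, f x ∂ν[|s] ≤ (ν s)⁻¹ * ∫⁻ x, g x ∂ν := by
  rw [ProbabilityTheory.cond, lintegral_smul_measure, smul_eq_mul]
  exact mul_le_mul' le_rfl ((setLIntegral_mono hg hfg).trans (setLIntegral_le_lintegral _ _))

lemma inv_measure_le_of_measure_compl_le {α : Type*} [MeasurableSpace α] {ν : Measure α}
    [IsProbabilityMeasure ν] {s : Set α} {ε : ℝ} (hε0 : 0 ≤ ε) (hε1 : ε < 1)
    (h : ν sᶜ ≤ ENNReal.ofReal ε) : (ν s)⁻¹ ≤ ENNReal.ofReal (1 - ε)⁻¹ := by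
  have hcover : 1 ≤ ν s + ENNReal.ofReal ε :=
    calc 1 = ν (s ∪ sᶜ) := by rw [Set.union_compl_self, measure_univ]
      _ ≤ ν s + ν sᶜ := measure_union_le _ _
      _ ≤ ν s + ENNReal.ofReal ε := by gcongr
  rw [ENNReal.ofReal_inv_of_pos (sub_pos.mpr hε1), ENNReal.inv_le_inv,
    ENNReal.ofReal_sub _ hε0, ENNReal.ofReal_one]
  exact tsub_le_iff_right.mpr hcover

lemma lintegral_sum_comp_eval_pi {ι α : Type*} [Fintype ι] [MeasurableSpace α] (ν : Measure α)
    [IsProbabilityMeasure ν] {g : α → ℝ≥0∞} (hg : Measurable g) :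
    ∫⁻ ω, ∑ i, g (ω i) ∂(Measure.pi fun _ : ι => ν) = Fintype.card ι * ∫⁻ a, g a ∂ν := by
  rw [lintegral_finsetSum (f := fun i (ω : ι → α) => g (ω i)) _ fun i _ =>
    hg.comp (measurable_pi_apply i)]
  simp_rw [(measurePreserving_eval (fun _ : ι => ν) _).lintegral_comp hg]
  rw [Finset.sum_const, Finset.card_univ, nsmul_eq_mul]

lemma measure_pi_best_gt_le_pow {Y : Type*} [MeasurableSpace Y] (ν : Measure Y) [SigmaFinite ν]
    {M : ℕ} (Z : Y → ℝ) (I : (Fin M → Y) → Fin M)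
    (hmin : ∀ (ω : Fin M → Y) i, Z (ω (I ω)) ≤ Z (ω i))
    {δ η : ℝ} (hη : 0 ≤ η) (h : ν {y | δ < Z y} ≤ ENNReal.ofReal η) :
    (Measure.pi fun _ : Fin M => ν) {ω | Z (ω (I ω)) ≤ δ}ᶜ ≤ ENNReal.ofReal (η ^ M) := by
  have hall_bad : {ω | Z (ω (I ω)) ≤ δ}ᶜ ⊆ Set.univ.pi fun _ : Fin M => {y | δ < Z y} :=
    fun ω hω i _ => (not_le.mp (Set.notMem_ofPred_iff.mp hω)).trans_le (hmin ω i)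
  calc _ ≤ (Measure.pi fun _ : Fin M => ν) (Set.univ.pi fun _ : Fin M => {y | δ < Z y}) :=
        measure_mono hall_bad
    _ ≤ ENNReal.ofReal (η ^ M) := by
        rw [Measure.pi_pi, Finset.prod_const, Finset.card_univ, Fintype.card_fin,
          ENNReal.ofReal_pow hη]
        exact pow_le_pow_left' h M

lemma abs_dotProduct_mulVec_le_specNorm {m : ℕ} (A : Matrix (Fin m) (Fin m) ℝ) (c : Fin m → ℝ) :
    |c ⬝ᵥ A *ᵥ c| ≤ specNorm A * (c ⬝ᵥ c) := by
  set x : EuclideanSpace ℝ (Fin m) := WithLp.toLp 2 c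
  have hinner : ⟪x, Matrix.toEuclideanCLM (𝕜 := ℝ) A x⟫ = c ⬝ᵥ A *ᵥ c := by
    rw [Matrix.toEuclideanCLM_toLp, EuclideanSpace.inner_eq_star_dotProduct]
    simp [x, dotProduct_comm]
  have hnorm : ‖x‖ ^ 2 = c ⬝ᵥ c := by
    rw [← real_inner_self_eq_norm_sq, EuclideanSpace.inner_eq_star_dotProduct]
    simp [x]
  calc |c ⬝ᵥ A *ᵥ c| ≤ ‖x‖ * ‖Matrix.toEuclideanCLM (𝕜 := ℝ) A x‖ :=
        hinner ▸ abs_real_inner_le_norm _ _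
    _ ≤ ‖x‖ * (specNorm A * ‖x‖) := by gcongr; exact ContinuousLinearMap.le_opNorm _ _
    _ = specNorm A * (c ⬝ᵥ c) := by rw [← hnorm]; ring

section DiscreteSeminorm

variable {X : Set (Fin d → ℝ)} (w : X → ℝ) {n : ℕ} (y : Fin n → X)

def discInner (u v : X → ℝ) : ℝ :=
  (1 / (n : ℝ)) * ∑ i, w (y i) * (u (y i) * v (y i))

lemma discNormSq_nonneg (hw : ∀ t, 0 ≤ w t) (u : X → ℝ) : 0 ≤ discNormSq w y u :=
  mul_nonneg (by positivity) (Finset.sum_nonneg fun i _ => mul_nonneg (hw _) (sq_nonneg _))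

lemma discNormSq_add_smul (u q : X → ℝ) (t : ℝ) :
    discNormSq w y (u + t • q) =
      discNormSq w y u + 2 * t * discInner w y u q + t ^ 2 * discNormSq w y q := by
  simp only [discNormSq, discInner, Pi.add_apply, Pi.smul_apply, smul_eq_mul, Finset.mul_sum,
    ← Finset.sum_add_distrib]
  exact Finset.sum_congr rfl fun i _ => by ring

lemma discNormSq_le_of_isLeastSquares (hw : ∀ t, 0 ≤ w t) {K : Submodule ℝ (X → ℝ)}
    {v q : X → ℝ} (hq : q ∈ K)
    (hmin : ∀ g ∈ K, discNormSq w y (v - q) ≤ discNormSq w y (v - g)) :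
    discNormSq w y q ≤ discNormSq w y v := by
  have hperp : discInner w y (v - q) q = 0 := by
    -- the competitors `q - t • q` give a nonnegative quadratic in `t` vanishing at `0`
    have hquad : ∀ t : ℝ,
        0 ≤ discNormSq w y q * (t * t) + 2 * discInner w y (v - q) q * t + 0 := fun t => by
      have h := hmin (q - t • q) (K.sub_mem hq (K.smul_mem t hq))
      rw [show v - (q - t • q) = (v - q) + t • q by abel, discNormSq_add_smul] at h
      nlinarith
    have hdisc := discrim_le_zero hquad
    rw [discrim] at hdisc
    nlinarith [sq_nonneg (discInner w y (v - q) q)]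
  have hpythagoras := discNormSq_add_smul w y (v - q) q 1
  rw [one_smul, sub_add_cancel, hperp] at hpythagoras
  nlinarith [discNormSq_nonneg w y hw (v - q)]

lemma discNormSq_sum_smul {m : ℕ} (φ : Fin m → X → ℝ) (c : Fin m → ℝ) :
    discNormSq w y (∑ j, c j • φ j) = c ⬝ᵥ gram w φ y *ᵥ c := by
  simp only [discNormSq, gram, dotProduct, Matrix.mulVec, Matrix.of_apply, Finset.sum_apply,
    Pi.smul_apply, smul_eq_mul, sq, Finset.mul_sum, Finset.sum_mul]
  rw [Finset.sum_comm]
  refine Finset.sum_congr rfl fun j _ => ?_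
  rw [Finset.sum_comm]
  refine Finset.sum_congr rfl fun k _ => Finset.sum_congr rfl fun i _ => ?_
  ring

end DiscreteSeminorm

section Stability

variable {X : Set (Fin d → ℝ)} (μ : Measure X) {m : ℕ} {φ : Fin m → X → ℝ}

lemma l2normSq_nonneg (v : X → ℝ) : 0 ≤ l2normSq μ v :=
  integral_nonneg fun _ => sq_nonneg _

lemma l2normSq_sum_smul_of_orthonormal (hφ2 : ∀ j, MemLp (φ j) 2 μ)
    (hortho : ∀ i j, (∫ t, φ i t * φ j t ∂μ) = if i = j then (1 : ℝ) else 0) (c : Fin m → ℝ) :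
    l2normSq μ (∑ j, c j • φ j) = c ⬝ᵥ c := by
  have hint : ∀ j k, Integrable (fun t => c j * c k * (φ j t * φ k t)) μ := fun j k =>
    ((hφ2 j).integrable_mul (hφ2 k)).const_mul _
  calc l2normSq μ (∑ j, c j • φ j)
      = ∫ t, ∑ j, ∑ k, c j * c k * (φ j t * φ k t) ∂μ := by
        refine integral_congr_ae (ae_of_all _ fun t => ?_)
        simp only [Finset.sum_apply, Pi.smul_apply, smul_eq_mul, sq, Finset.sum_mul_sum]
        exact Finset.sum_congr rfl fun j _ => Finset.sum_congr rfl fun k _ => by ring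
    _ = ∑ j, ∑ k, c j * c k * ∫ t, φ j t * φ k t ∂μ := by
        rw [integral_finsetSum _ fun j _ => integrable_finsetSum _ fun k _ => hint j k]
        refine Finset.sum_congr rfl fun j _ => ?_
        rw [integral_finsetSum _ fun k _ => hint j k]
        exact Finset.sum_congr rfl fun k _ => integral_const_mul _ _
    _ = c ⬝ᵥ c := by simp [hortho, dotProduct]

lemma l2normSq_le_of_Zstat_le {w : X → ℝ} (hφ2 : ∀ j, MemLp (φ j) 2 μ)
    (hortho : ∀ i j, (∫ t, φ i t * φ j t ∂μ) = if i = j then (1 : ℝ) else 0)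
    {δ : ℝ} (hδ1 : δ < 1) {n : ℕ} {y : Fin n → X} (hZ : Zstat w φ y ≤ δ)
    {q : X → ℝ} (hq : q ∈ Vspan φ) :
    l2normSq μ q ≤ (1 - δ)⁻¹ * discNormSq w y q := by
  obtain ⟨c, rfl⟩ := (Submodule.mem_span_range_iff_exists_fun ℝ).mp hq
  have hsplit : c ⬝ᵥ gram w φ y *ᵥ c = c ⬝ᵥ c + c ⬝ᵥ (gram w φ y - 1) *ᵥ c := by
    simp [Matrix.sub_mulVec, dotProduct_sub]
  have hdev := (abs_le.mp ((abs_dotProduct_mulVec_le_specNorm (gram w φ y - 1) c).trans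
    (mul_le_mul_of_nonneg_right hZ (dotProduct_self_star_nonneg c)))).1
  rw [l2normSq_sum_smul_of_orthonormal μ hφ2 hortho, discNormSq_sum_smul, hsplit,
    le_inv_mul_iff₀ (sub_pos.mpr hδ1)]
  nlinarith

lemma l2normSq_le_of_isLeastSquares {w : X → ℝ} (hw : ∀ t, 0 ≤ w t)
    (hφ2 : ∀ j, MemLp (φ j) 2 μ)
    (hortho : ∀ i j, (∫ t, φ i t * φ j t ∂μ) = if i = j then (1 : ℝ) else 0)
    {δ : ℝ} (hδ1 : δ < 1) {n : ℕ} {y : Fin n → X} (hZ : Zstat w φ y ≤ δ) {v q : X → ℝ}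
    (hq : q ∈ Vspan φ) (hmin : ∀ g ∈ Vspan φ, discNormSq w y (v - q) ≤ discNormSq w y (v - g)) :
    l2normSq μ q ≤ (1 - δ)⁻¹ * discNormSq w y v :=
  (l2normSq_le_of_Zstat_le μ hφ2 hortho hδ1 hZ hq).trans <|
    mul_le_mul_of_nonneg_left (discNormSq_le_of_isLeastSquares w y hw hq hmin)
      (inv_nonneg.mpr (sub_nonneg.mpr hδ1.le))

lemma l2normSq_le_sum_of_isLeastSquares {w : X → ℝ} (hw : ∀ t, 0 ≤ w t)
    (hφ2 : ∀ j, MemLp (φ j) 2 μ)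
    (hortho : ∀ i j, (∫ t, φ i t * φ j t ∂μ) = if i = j then (1 : ℝ) else 0)
    {δ : ℝ} (hδ1 : δ < 1) {ι : Type*} [Fintype ι] {n : ℕ} {ys : ι → Fin n → X} {k : ι}
    (hZ : Zstat w φ (ys k) ≤ δ) {v q : X → ℝ} (hq : q ∈ Vspan φ)
    (hmin : ∀ g ∈ Vspan φ, discNormSq w (ys k) (v - q) ≤ discNormSq w (ys k) (v - g)) :
    l2normSq μ q ≤ (1 - δ)⁻¹ * ∑ i, discNormSq w (ys i) v :=
  (l2normSq_le_of_isLeastSquares μ hw hφ2 hortho hδ1 hZ hq hmin).trans <|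
    mul_le_mul_of_nonneg_left
      (Finset.single_le_sum (fun i _ => discNormSq_nonneg w (ys i) hw v) (Finset.mem_univ k))
      (inv_nonneg.mpr (sub_nonneg.mpr hδ1.le))

end Stability

section Sampling

variable {X : Set (Fin d → ℝ)} {w v : X → ℝ}

instance (ρ : Measure X) [IsProbabilityMeasure ρ] (M n : ℕ) :
    IsProbabilityMeasure (bigP ρ M n) := by
  unfold bigP; infer_instance

lemma measurable_discNormSq (hwm : Measurable w) (hvm : Measurable v) (n : ℕ) :
    Measurable fun y : Fin n → X => discNormSq w y v :=
  measurable_const.mul <| Finset.measurable_sum _ fun i _ =>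
    (hwm.comp (measurable_pi_apply i)).mul ((hvm.comp (measurable_pi_apply i)).pow_const 2)

lemma measurable_sum_discNormSq (hwm : Measurable w) (hvm : Measurable v) (M n : ℕ) :
    Measurable fun ω : Fin M → Fin n → X => ∑ i, ENNReal.ofReal (discNormSq w (ω i) v) :=
  Finset.measurable_sum _ fun i _ =>
    (measurable_discNormSq hwm hvm n).ennreal_ofReal.comp (measurable_pi_apply i)

lemma lintegral_discNormSq_le (hw : ∀ t, 0 ≤ w t) (hwm : Measurable w) (hvm : Measurable v)
    (ρ : Measure X) [IsProbabilityMeasure ρ] (n : ℕ) :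
    ∫⁻ y, ENNReal.ofReal (discNormSq w y v) ∂(Measure.pi fun _ : Fin n => ρ) ≤
      ∫⁻ t, ENNReal.ofReal (w t * v t ^ 2) ∂ρ := by
  have hterms : ∀ y : Fin n → X, ENNReal.ofReal (discNormSq w y v) =
      ENNReal.ofReal (1 / n) * ∑ i, ENNReal.ofReal (w (y i) * v (y i) ^ 2) := fun y => by
    rw [discNormSq, ENNReal.ofReal_mul (by positivity),
      ENNReal.ofReal_sum_of_nonneg fun i _ => mul_nonneg (hw _) (sq_nonneg _)]
  -- `≤` rather than `=` only because `1 / 0 = 0` makes the empty sample worthless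
  have hmean : ENNReal.ofReal (1 / n) * n ≤ 1 := by
    rw [← ENNReal.ofReal_natCast, ← ENNReal.ofReal_mul (by positivity), ← ENNReal.ofReal_one]
    refine ENNReal.ofReal_le_ofReal ?_
    rcases n.eq_zero_or_pos with rfl | hn
    · simp
    · rw [one_div_mul_cancel (by positivity)]
  have hwv : Measurable fun t => ENNReal.ofReal (w t * v t ^ 2) :=
    (hwm.mul (hvm.pow_const 2)).ennreal_ofReal
  simp_rw [hterms]
  rw [lintegral_const_mul' _ _ ENNReal.ofReal_ne_top, lintegral_sum_comp_eval_pi ρ hwv,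
    Fintype.card_fin, ← mul_assoc]
  exact mul_le_of_le_one_left' hmean

lemma lintegral_weight_mul_sq_withDensity_inv (μ : Measure X) (hw : ∀ t, 0 < w t)
    (hwm : Measurable w) (hvm : Measurable v) (hv2 : MemLp v 2 μ) :
    ∫⁻ t, ENNReal.ofReal (w t * v t ^ 2) ∂(μ.withDensity fun t => ENNReal.ofReal (w t)⁻¹) =
      ENNReal.ofReal (l2normSq μ v) := by
  have hdens : Measurable fun t => ENNReal.ofReal (w t)⁻¹ := hwm.inv.ennreal_ofReal
  have hwv : Measurable fun t => ENNReal.ofReal (w t * v t ^ 2) :=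
    (hwm.mul (hvm.pow_const 2)).ennreal_ofReal
  rw [lintegral_withDensity_eq_lintegral_mul _ hdens hwv, l2normSq,
    ofReal_integral_eq_lintegral_ofReal hv2.integrable_sq (ae_of_all _ fun t => sq_nonneg _)]
  refine lintegral_congr fun t => ?_
  rw [Pi.mul_apply, ← ENNReal.ofReal_mul (inv_nonneg.mpr (hw t).le),
    inv_mul_cancel_left₀ (hw t).ne']

lemma lintegral_sum_discNormSq_bigP_le (μ : Measure X) (hw : ∀ t, 0 < w t) (hwm : Measurable w)
    (ρ : Measure X) [IsProbabilityMeasure ρ]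
    (hρ : ρ = μ.withDensity fun t => ENNReal.ofReal (w t)⁻¹)
    (hvm : Measurable v) (hv2 : MemLp v 2 μ) (M n : ℕ) :
    ∫⁻ ω, ∑ i, ENNReal.ofReal (discNormSq w (ω i) v) ∂(bigP ρ M n) ≤
      M * ENNReal.ofReal (l2normSq μ v) := by
  rw [bigP, lintegral_sum_comp_eval_pi _ (measurable_discNormSq hwm hvm n).ennreal_ofReal,
    Fintype.card_fin, ← lintegral_weight_mul_sq_withDensity_inv μ hw hwm hvm hv2, ← hρ]
  gcongr
  exact lintegral_discNormSq_le (fun t => (hw t).le) hwm hvm ρ n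

end Sampling

theorem boosted_lsq_projection_stability_general
    {m n M : ℕ} (hM : 0 < M) {X : Set (Fin d → ℝ)} (μ : Measure X) [IsProbabilityMeasure μ]
    (w : X → ℝ) (hw : ∀ t, 0 < w t) (hwm : Measurable w)
    (ρ : Measure X) [IsProbabilityMeasure ρ]
    (hρ : ρ = μ.withDensity fun t => ENNReal.ofReal (w t)⁻¹)
    (φ : Fin m → X → ℝ) (hφ2 : ∀ j, MemLp (φ j) 2 μ)
    (hortho : ∀ i j, (∫ t, φ i t * φ j t ∂μ) = if i = j then (1 : ℝ) else 0)
    (δ η : ℝ) (hδ1 : δ < 1) (hη0 : 0 < η) (hη1 : η < 1)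
    (hPZ : (Measure.pi fun _ : Fin n => ρ) {y | δ < Zstat w φ y} ≤ ENNReal.ofReal η)
    (Istar : (Fin M → Fin n → X) → Fin M)
    (hmin : ∀ (ω : Fin M → Fin n → X) (i : Fin M),
      Zstat w φ (ω (Istar ω)) ≤ Zstat w φ (ω i))
    (v : X → ℝ) (hvm : Measurable v) (hv2 : MemLp v 2 μ)
    (Q : (Fin n → X) → X → ℝ)
    (hQ : ∀ y : Fin n → X, Q y ∈ Vspan φ ∧
      ∀ g ∈ Vspan φ, discNormSq w y (v - Q y) ≤ discNormSq w y (v - g)) :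
    (∫ ω, l2normSq μ (Q (ω (Istar ω)))
        ∂((bigP ρ M n)[|{ω | Zstat w φ (ω (Istar ω)) ≤ δ}])) ≤
      (1 - δ)⁻¹ * M * (1 - η ^ M)⁻¹ * l2normSq μ v := by
  set A := {ω : Fin M → Fin n → X | Zstat w φ (ω (Istar ω)) ≤ δ}
  have hw0 : ∀ t, 0 ≤ w t := fun t => (hw t).le
  have hδinv : 0 ≤ (1 - δ)⁻¹ := inv_nonneg.mpr (sub_nonneg.mpr hδ1.le)
  have hηM : η ^ M < 1 := pow_lt_one₀ hη0.le hη1 hM.ne'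
  have hηinv : 0 ≤ (1 - η ^ M)⁻¹ := inv_nonneg.mpr (sub_nonneg.mpr hηM.le)
  have hv := l2normSq_nonneg μ v
  have hPA : (bigP ρ M n A)⁻¹ ≤ ENNReal.ofReal (1 - η ^ M)⁻¹ :=
    inv_measure_le_of_measure_compl_le (pow_nonneg hη0.le M) hηM
      (measure_pi_best_gt_le_pow _ _ Istar hmin hη0.le hPZ)
  have hstable : ∀ ω ∈ A, ENNReal.ofReal (l2normSq μ (Q (ω (Istar ω)))) ≤
      ENNReal.ofReal (1 - δ)⁻¹ * ∑ i, ENNReal.ofReal (discNormSq w (ω i) v) := fun ω hω => by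
    rw [← ENNReal.ofReal_sum_of_nonneg fun i _ => discNormSq_nonneg w _ hw0 v,
      ← ENNReal.ofReal_mul hδinv]
    exact ENNReal.ofReal_le_ofReal
      (l2normSq_le_sum_of_isLeastSquares μ hw0 hφ2 hortho hδ1 hω (hQ _).1 (hQ _).2)
  refine integral_le_of_lintegral_ofReal_le (fun ω => l2normSq_nonneg μ _)
    (by positivity) ?_
  calc _ ≤ (bigP ρ M n A)⁻¹ * ∫⁻ ω, ENNReal.ofReal (1 - δ)⁻¹ *
          ∑ i, ENNReal.ofReal (discNormSq w (ω i) v) ∂(bigP ρ M n) :=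
        lintegral_cond_le _ ((measurable_sum_discNormSq hwm hvm M n).const_mul _) hstable
    _ ≤ ENNReal.ofReal (1 - η ^ M)⁻¹ * (ENNReal.ofReal (1 - δ)⁻¹ *
          (M * ENNReal.ofReal (l2normSq μ v))) := by
        rw [lintegral_const_mul _ (measurable_sum_discNormSq hwm hvm M n)]
        gcongr
        exact lintegral_sum_discNormSq_bigP_le μ hw hwm ρ hρ hvm hv2 M n
    _ = ENNReal.ofReal ((1 - δ)⁻¹ * M * (1 - η ^ M)⁻¹ * l2normSq μ v) := by
        rw [ENNReal.ofReal_mul (by positivity),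
          ENNReal.ofReal_mul (by positivity), ENNReal.ofReal_mul hδinv, ENNReal.ofReal_natCast]
        ring

/-- stability in expectation of the boosted weighted least-squares projection. -/
theorem boosted_lsq_projection_stability
    {m n M : ℕ} (hM : 0 < M) {X : Set (Fin d → ℝ)} (μ : Measure X) [IsProbabilityMeasure μ]
    (w : X → ℝ) (hw : ∀ t, 0 < w t) (hwm : Measurable w)
    (ρ : Measure X) [IsProbabilityMeasure ρ]
    (hρ : ρ = μ.withDensity fun t => ENNReal.ofReal (w t)⁻¹)
    (φ : Fin m → X → ℝ) (hφm : ∀ j, Measurable (φ j)) (hφ2 : ∀ j, MemLp (φ j) 2 μ)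
    (hortho : ∀ i j, (∫ t, φ i t * φ j t ∂μ) = if i = j then (1 : ℝ) else 0)
    (δ η : ℝ) (hδ0 : 0 < δ) (hδ1 : δ < 1) (hη0 : 0 < η) (hη1 : η < 1)
    (hPZ : (Measure.pi fun _ : Fin n => ρ) {y | δ < Zstat w φ y} ≤ ENNReal.ofReal η)
    (Istar : (Fin M → Fin n → X) → Fin M) (hIm : Measurable Istar)
    (hmin : ∀ (ω : Fin M → Fin n → X) (i : Fin M),
      Zstat w φ (ω (Istar ω)) ≤ Zstat w φ (ω i))
    (hexch : ∀ σ : Equiv.Perm (Fin M),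
      Measure.map (fun ω : Fin M → Fin n → X => ((fun i => ω (σ i)), σ.symm (Istar ω)))
          (bigP ρ M n) =
        Measure.map (fun ω => (ω, Istar ω)) (bigP ρ M n))
    (v : X → ℝ) (hvm : Measurable v) (hv2 : MemLp v 2 μ)
    (Q : (Fin n → X) → X → ℝ)
    (hQ : ∀ y : Fin n → X, Q y ∈ Vspan φ ∧
      ∀ g ∈ Vspan φ, discNormSq w y (v - Q y) ≤ discNormSq w y (v - g)) :
    (∫ ω, l2normSq μ (Q (ω (Istar ω)))
        ∂((bigP ρ M n)[|{ω | Zstat w φ (ω (Istar ω)) ≤ δ}])) ≤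
      (1 - δ)⁻¹ * M * (1 - η ^ M)⁻¹ * l2normSq μ v :=
  boosted_lsq_projection_stability_general hM μ w hw hwm ρ hρ φ hφ2 hortho δ η hδ1 hη0 hη1 hPZ Istar
    hmin v hvm hv2 Q hQ
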